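/- Let λ > 0 and let ψ ∈ P^r satisfy Γ_λ(ψ) = L(1). Then 0 < ψ(t₀) < 1, the maximum of |ψ| over [t₀, t₁] is attained at the left endpoint with sup_{t∈[t₀,t₁]} |ψ(t)| = ψ(t₀), and the maximum of |ψ'| over [t₀, t₁] satisfies sup_{t∈[t₀,t₁]} |ψ'(t)| = −ψ'(t₀). -/

import Mathlib

open Polynomial MeasureTheory intervalIntegral

/-- The rescaled Legendre polynomials on `[t₀, t₁]`: `K i` has degree `i`,
`K i (t₁) = 1`, `K i (t₀) = (-1)^i`, and they are `L²(t₀,t₁)`-orthogonal with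
`∫ K i ^ 2 = (t₁ - t₀)/(2 i + 1)`. -/
def IsLegendreBasis (t₀ t₁ : ℝ) (K : ℕ → Polynomial ℝ) : Prop :=
  (∀ i, (K i).natDegree = i) ∧ (∀ i, (K i).eval t₁ = 1) ∧
  (∀ i, (K i).eval t₀ = (-1 : ℝ) ^ i) ∧
  (∀ i j, (∫ t in t₀..t₁, (K i).eval t * (K j).eval t) =
    if i = j then (t₁ - t₀) / (2 * (i : ℝ) + 1) else 0)

/-- The lifting operator `L(z) = (z/k) ∑_{i=0}^r (-1)^i (2i+1) K_i`. -/
noncomputable def Lop (t₀ t₁ : ℝ) (r : ℕ) (K : ℕ → Polynomial ℝ) (z : ℝ) : Polynomial ℝ :=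
  Polynomial.C (z / (t₁ - t₀)) *
    ∑ i ∈ Finset.range (r + 1), Polynomial.C ((-1 : ℝ) ^ i * (2 * (i : ℝ) + 1)) * K i

/-- The endpoint lifting operator `L̂(z) = (z/k) ∑_{i=0}^r (2i+1) K_i`. -/
noncomputable def LopE (t₀ t₁ : ℝ) (r : ℕ) (K : ℕ → Polynomial ℝ) (z : ℝ) : Polynomial ℝ :=
  Polynomial.C (z / (t₁ - t₀)) *
    ∑ i ∈ Finset.range (r + 1), Polynomial.C (2 * (i : ℝ) + 1) * K i

/-- The scalar dG operator `Γ_λ(v) = v' + L(v(t₀)) + λ v`. -/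
noncomputable def Gam (t₀ t₁ : ℝ) (r : ℕ) (K : ℕ → Polynomial ℝ) (lam : ℝ)
    (v : Polynomial ℝ) : Polynomial ℝ :=
  Polynomial.derivative v + Lop t₀ t₁ r K (v.eval t₀) + Polynomial.C lam * v

/-!
Write `ψ = ∑ aᵢ Kᵢ`. Testing `Γ_λ ψ = L(1)` against `K_j`, and using `∫ Kᵢ' K_j = 1 - (-1)^(i+j)`
for `j < i` (and `0` otherwise), gives for `bᵢ = (-1)ⁱ aᵢ` the triangular system
`λ k/(2j+1) b_j = (1 - ψ(t₀)) + ∑_{i>j} (1 - (-1)^(i+j)) bᵢ` with nonnegative couplings. Back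
substitution gives every `b_j` the sign of `1 - ψ(t₀)`, and since `ψ(t₀) = ∑ bᵢ` this sign is
positive. Hence `|ψ| ≤ ∑ |aᵢ| |Kᵢ| ≤ ∑ bᵢ = ψ(t₀)`, and likewise for `ψ'`, because
`|Kᵢ| ≤ 1 = |Kᵢ(t₀)|` and `|Kᵢ'| ≤ i(i+1)/k = |Kᵢ'(t₀)|` on `[t₀, t₁]`.

These bounds come from the Legendre equation `((t - t₀)(t₁ - t) Kᵢ')' = -i(i+1) Kᵢ`, which follows
from orthogonality alone: for `P = Kᵢ` and `P = Kᵢ'` an energy `c P² + (t - t₀)(t₁ - t) P'²`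
decreases towards the midpoint of the interval, so `|P|` is largest at the endpoints.
-/

noncomputable def polyInner (t₀ t₁ : ℝ) (p q : ℝ[X]) : ℝ := ∫ t in t₀..t₁, p.eval t * q.eval t

section PolyInner

variable (t₀ t₁ : ℝ)

lemma intervalIntegrable_eval_mul_eval (p q : ℝ[X]) :
    IntervalIntegrable (fun t => p.eval t * q.eval t) volume t₀ t₁ :=
  (p.continuous.mul q.continuous).intervalIntegrable _ _

lemma polyInner_comm (p q : ℝ[X]) : polyInner t₀ t₁ p q = polyInner t₀ t₁ q p := by
  simp only [polyInner, mul_comm]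

lemma polyInner_add_left (p q s : ℝ[X]) :
    polyInner t₀ t₁ (p + q) s = polyInner t₀ t₁ p s + polyInner t₀ t₁ q s := by
  simp only [polyInner, eval_add, add_mul]
  exact integral_add (intervalIntegrable_eval_mul_eval t₀ t₁ p s)
    (intervalIntegrable_eval_mul_eval t₀ t₁ q s)

lemma polyInner_C_mul_left (a : ℝ) (p q : ℝ[X]) :
    polyInner t₀ t₁ (C a * p) q = a * polyInner t₀ t₁ p q := by
  simp only [polyInner, eval_mul, eval_C, mul_assoc, intervalIntegral.integral_const_mul]

lemma polyInner_sum_left {ι : Type*} (s : Finset ι) (f : ι → ℝ[X]) (q : ℝ[X]) :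
    polyInner t₀ t₁ (∑ i ∈ s, f i) q = ∑ i ∈ s, polyInner t₀ t₁ (f i) q := by
  simp only [polyInner, eval_finsetSum, Finset.sum_mul]
  exact integral_finsetSum fun i _ => intervalIntegrable_eval_mul_eval t₀ t₁ (f i) q

lemma polyInner_derivative_add (p q : ℝ[X]) :
    polyInner t₀ t₁ (derivative p) q + polyInner t₀ t₁ p (derivative q) =
      (p * q).eval t₁ - (p * q).eval t₀ := by
  rw [polyInner, polyInner, integral_mul_deriv_eq_deriv_mul (fun t _ => p.hasDerivAt t)
    (fun t _ => q.hasDerivAt t) (p.derivative.continuous.intervalIntegrable _ _)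
    (q.derivative.continuous.intervalIntegrable _ _), eval_mul, eval_mul]
  ring

end PolyInner

lemma exists_eq_sum_C_mul_of_degree_lt {F : Type*} [Field F] {K : ℕ → F[X]}
    (hK : ∀ i, (K i).degree = i) {n : ℕ} {p : F[X]} (hp : p.degree < n) :
    ∃ f : ℕ → F, p = ∑ i ∈ Finset.range n, C (f i) * K i := by
  induction n generalizing p with
  | zero => exact ⟨0, by simpa using hp⟩
  | succ n ih =>
    have hKn : (K n).natDegree = n := natDegree_eq_of_degree_eq_some (hK n)
    have hlead : (K n).coeff n ≠ 0 := by
      have : (K n).leadingCoeff ≠ 0 := leadingCoeff_ne_zero.2 fun h => by simpa [h] using hK n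
      rwa [leadingCoeff, hKn] at this
    set α := p.coeff n / (K n).coeff n
    obtain ⟨f, hf⟩ := ih (p := p - C α * K n) <| by
      refine (degree_lt_iff_coeff_zero _ _).2 fun m hm => ?_
      rw [coeff_sub, coeff_C_mul]
      obtain rfl | hm := hm.eq_or_lt
      · rw [div_mul_cancel₀ _ hlead, sub_self]
      · rw [(degree_lt_iff_coeff_zero p _).1 hp m hm,
          coeff_eq_zero_of_natDegree_lt (hKn.trans_lt hm), mul_zero, sub_zero]
    refine ⟨Function.update f n α, ?_⟩
    rw [Finset.sum_range_succ, Function.update_self,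
      Finset.sum_congr rfl fun i hi => by
        rw [Function.update_of_ne (Finset.mem_range.1 hi).ne], ← hf]
    ring

noncomputable def bubble (t₀ t₁ : ℝ) : ℝ[X] := (X - C t₀) * (C t₁ - X)

section Bubble

variable (t₀ t₁ : ℝ)

@[simp] lemma bubble_eval_left : (bubble t₀ t₁).eval t₀ = 0 := by simp [bubble]

@[simp] lemma bubble_eval_right : (bubble t₀ t₁).eval t₁ = 0 := by simp [bubble]

lemma bubble_eval_nonneg {t : ℝ} (ht : t ∈ Set.Icc t₀ t₁) : 0 ≤ (bubble t₀ t₁).eval t := by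
  simpa [bubble] using mul_nonneg (sub_nonneg.2 ht.1) (sub_nonneg.2 ht.2)

lemma derivative_bubble : derivative (bubble t₀ t₁) = C (t₀ + t₁) - 2 * X := by
  simp only [bubble, derivative_mul, derivative_sub, derivative_X, derivative_C, map_add]
  ring

lemma natDegree_bubble_le : (bubble t₀ t₁).natDegree ≤ 2 := by
  have h : (C t₁ - X).natDegree ≤ 1 := by
    rw [← neg_sub, natDegree_neg]
    exact natDegree_X_sub_C_le t₁
  exact natDegree_mul_le_of_le (natDegree_X_sub_C_le t₀) h

lemma natDegree_derivative_bubble_mul_derivative_le (p : ℝ[X]) :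
    (derivative (bubble t₀ t₁ * derivative p)).natDegree ≤ p.natDegree := by
  obtain hp | hp := Nat.eq_zero_or_pos p.natDegree
  · simp [derivative_of_natDegree_zero hp]
  · have := natDegree_mul_le_of_le (natDegree_bubble_le t₀ t₁) (natDegree_derivative_le p)
    have := natDegree_derivative_le (bubble t₀ t₁ * derivative p)
    omega

lemma coeff_derivative_bubble_mul_derivative {p : ℝ[X]} {n : ℕ} (hp : p.natDegree ≤ n) :
    (derivative (bubble t₀ t₁ * derivative p)).coeff n = -(n * (n + 1)) * p.coeff n := by
  have hbubble : bubble t₀ t₁ = C (t₀ + t₁) * X - C (t₀ * t₁) - X ^ 2 := by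
    simp only [bubble, map_add, map_mul]
    ring
  have hn1 : p.coeff (n + 1) = 0 := coeff_eq_zero_of_natDegree_lt (by omega)
  have hn2 : p.coeff (n + 2) = 0 := coeff_eq_zero_of_natDegree_lt (by omega)
  rw [coeff_derivative, hbubble, sub_mul, sub_mul, coeff_sub, coeff_sub, mul_assoc,
    coeff_C_mul, coeff_C_mul, coeff_X_mul, coeff_derivative, coeff_derivative, hn1, hn2]
  cases n with
  | zero => simp [derivative_of_natDegree_zero (Nat.le_zero.1 hp)]
  | succ m =>
    rw [show m + 1 + 1 = m + 2 by ring, coeff_X_pow_mul, coeff_derivative]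
    push_cast
    ring

lemma polyInner_derivative_bubble_mul (p q : ℝ[X]) :
    polyInner t₀ t₁ (derivative (bubble t₀ t₁ * derivative p)) q =
      -polyInner t₀ t₁ (bubble t₀ t₁ * derivative p) (derivative q) := by
  have := polyInner_derivative_add t₀ t₁ (bubble t₀ t₁ * derivative p) q
  simp only [eval_mul, bubble_eval_left, bubble_eval_right, zero_mul, sub_self] at this
  linarith

lemma polyInner_derivative_bubble_mul_comm (p q : ℝ[X]) :
    polyInner t₀ t₁ (derivative (bubble t₀ t₁ * derivative p)) q =
      polyInner t₀ t₁ (derivative (bubble t₀ t₁ * derivative q)) p := by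
  rw [polyInner_derivative_bubble_mul, polyInner_derivative_bubble_mul, polyInner, polyInner]
  congr 2
  funext t
  simp only [eval_mul]
  ring

end Bubble

lemma le_max_of_deriv_nonpos_of_deriv_nonneg {f : ℝ → ℝ} (hf : Differentiable ℝ f) {m : ℝ}
    (hl : ∀ t < m, deriv f t ≤ 0) (hr : ∀ t, m < t → 0 ≤ deriv f t) {a b t : ℝ}
    (ht : t ∈ Set.Icc a b) : f t ≤ max (f a) (f b) := by
  rcases le_total t m with htm | htm
  · have hanti : AntitoneOn f (Set.Iic m) := antitoneOn_of_deriv_nonpos (convex_Iic m)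
      hf.continuous.continuousOn hf.differentiableOn (by simpa using hl)
    exact (hanti (ht.1.trans htm) htm ht.1).trans (le_max_left _ _)
  · have hmono : MonotoneOn f (Set.Ici m) := monotoneOn_of_deriv_nonneg (convex_Ici m)
      hf.continuous.continuousOn hf.differentiableOn (by simpa using hr)
    exact (hmono htm (htm.trans ht.2) ht.2).trans (le_max_right _ _)

lemma abs_eval_le_of_bubble_mul_derivative_derivative {t₀ t₁ : ℝ} {P : ℝ[X]} {c α M : ℝ}
    (hc : 0 < c) (hα : 1 ≤ 2 * α)
    (hP : bubble t₀ t₁ * derivative (derivative P) =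
      -(C c * P) - C α * derivative (bubble t₀ t₁) * derivative P)
    (h₀ : |P.eval t₀| ≤ M) (h₁ : |P.eval t₁| ≤ M) {t : ℝ} (ht : t ∈ Set.Icc t₀ t₁) :
    |P.eval t| ≤ M := by
  set E := C c * P ^ 2 + bubble t₀ t₁ * derivative P ^ 2
  have hE : ∀ s, (derivative E).eval s =
      (2 * α - 1) * (2 * s - (t₀ + t₁)) * (derivative P).eval s ^ 2 := by
    have : derivative E = -(C (2 * α - 1) * derivative (bubble t₀ t₁) * derivative P ^ 2) := by
      simp only [E, derivative_add, derivative_mul, derivative_C, derivative_sq, zero_mul,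
        zero_add, map_sub, map_mul, map_one, map_ofNat]
      linear_combination (2 * derivative P) * hP
    intro s
    simp only [this, derivative_bubble, map_sub, map_mul, map_one, map_add, eval_neg, eval_mul,
      eval_sub, eval_C, eval_one, eval_add, eval_ofNat, eval_X, eval_pow]
    ring
  have hEt : E.eval t ≤ c * M ^ 2 := by
    refine (le_max_of_deriv_nonpos_of_deriv_nonneg E.differentiable (m := (t₀ + t₁) / 2)
      (fun s hs => ?_) (fun s hs => ?_) ht).trans (max_le ?_ ?_)
    · rw [Polynomial.deriv, hE]
      exact mul_nonpos_of_nonpos_of_nonneg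
        (mul_nonpos_of_nonneg_of_nonpos (by linarith) (by linarith)) (sq_nonneg _)
    · rw [Polynomial.deriv, hE]
      exact mul_nonneg (mul_nonneg (by linarith) (by linarith)) (sq_nonneg _)
    · simpa [E] using mul_le_mul_of_nonneg_left (sq_le_sq.2 (h₀.trans (le_abs_self M))) hc.le
    · simpa [E] using mul_le_mul_of_nonneg_left (sq_le_sq.2 (h₁.trans (le_abs_self M))) hc.le
  have hcP : c * P.eval t ^ 2 ≤ E.eval t := by
    simpa [E] using mul_nonneg (bubble_eval_nonneg t₀ t₁ ht) (sq_nonneg ((derivative P).eval t))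
  exact abs_le_of_sq_le_sq (le_of_mul_le_mul_left (hcP.trans hEt) hc)
    ((abs_nonneg _).trans h₀)

lemma le_mul_of_eq_add_sum_Ioc {r : ℕ} {κ x : ℕ → ℝ} {w : ℕ → ℕ → ℝ} {c : ℝ} (hc : 0 ≤ c)
    (hκ : ∀ j ≤ r, 0 < κ j) (hw : ∀ i j, 0 ≤ w i j)
    (h : ∀ j ≤ r, κ j * x j = c + ∑ i ∈ Finset.Ioc j r, w i j * x i) :
    ∀ j ≤ r, c ≤ κ j * x j := by
  intro j
  induction hd : r - j using Nat.strong_induction_on generalizing j with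
  | _ d ih =>
    intro hj
    rw [h j hj]
    refine le_add_of_nonneg_right (Finset.sum_nonneg fun i hi => mul_nonneg (hw i j) ?_)
    obtain ⟨hji, hir⟩ := Finset.mem_Ioc.1 hi
    exact nonneg_of_mul_nonneg_right (hc.trans (ih (r - i) (by omega) i rfl hir)) (hκ i hir)

lemma abs_sum_mul_le_sum_abs_mul {ι : Type*} (s : Finset ι) {a f M : ι → ℝ}
    (h : ∀ i ∈ s, |f i| ≤ M i) : |∑ i ∈ s, a i * f i| ≤ ∑ i ∈ s, |a i| * M i :=
  (Finset.abs_sum_le_sum_abs _ _).trans <| Finset.sum_le_sum fun i hi => by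
    rw [abs_mul]
    exact mul_le_mul_of_nonneg_left (h i hi) (abs_nonneg _)

namespace IsLegendreBasis

variable {t₀ t₁ : ℝ} {K : ℕ → ℝ[X]}

lemma natDegree_eq (hK : IsLegendreBasis t₀ t₁ K) (i : ℕ) : (K i).natDegree = i := hK.1 i

lemma eval_right (hK : IsLegendreBasis t₀ t₁ K) (i : ℕ) : (K i).eval t₁ = 1 := hK.2.1 i

lemma eval_left (hK : IsLegendreBasis t₀ t₁ K) (i : ℕ) : (K i).eval t₀ = (-1) ^ i := hK.2.2.1 i

lemma polyInner_self (hK : IsLegendreBasis t₀ t₁ K) (i : ℕ) :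
    polyInner t₀ t₁ (K i) (K i) = (t₁ - t₀) / (2 * i + 1) :=
  (hK.2.2.2 i i).trans (if_pos rfl)

lemma polyInner_of_ne (hK : IsLegendreBasis t₀ t₁ K) {i j : ℕ} (hij : i ≠ j) :
    polyInner t₀ t₁ (K i) (K j) = 0 :=
  (hK.2.2.2 i j).trans (if_neg hij)

lemma ne_zero (hK : IsLegendreBasis t₀ t₁ K) (i : ℕ) : K i ≠ 0 := fun h => by
  simpa [h] using hK.eval_right i

lemma degree_eq (hK : IsLegendreBasis t₀ t₁ K) (i : ℕ) : (K i).degree = i := by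
  rw [degree_eq_natDegree (hK.ne_zero i), hK.natDegree_eq]

lemma polyInner_sum_C_mul (hK : IsLegendreBasis t₀ t₁ K) (f : ℕ → ℝ) {n j : ℕ} (hj : j < n) :
    polyInner t₀ t₁ (∑ i ∈ Finset.range n, C (f i) * K i) (K j) =
      f j * ((t₁ - t₀) / (2 * j + 1)) := by
  rw [polyInner_sum_left, Finset.sum_eq_single j, polyInner_C_mul_left, hK.polyInner_self]
  · intro i _ hij
    rw [polyInner_C_mul_left, hK.polyInner_of_ne hij, mul_zero]
  · exact fun hj' => absurd (Finset.mem_range.2 hj) hj'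

lemma polyInner_eq_zero_of_degree_lt (hK : IsLegendreBasis t₀ t₁ K) {p : ℝ[X]} {j : ℕ}
    (hp : p.degree < j) : polyInner t₀ t₁ p (K j) = 0 := by
  obtain ⟨f, rfl⟩ := exists_eq_sum_C_mul_of_degree_lt hK.degree_eq hp
  rw [polyInner_sum_left]
  refine Finset.sum_eq_zero fun i hi => ?_
  rw [polyInner_C_mul_left, hK.polyInner_of_ne (Finset.mem_range.1 hi).ne, mul_zero]

lemma eq_zero_of_forall_polyInner_eq_zero (hK : IsLegendreBasis t₀ t₁ K) (ht : t₀ < t₁)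
    {p : ℝ[X]} {n : ℕ} (hp : p.degree < n) (h : ∀ m < n, polyInner t₀ t₁ p (K m) = 0) :
    p = 0 := by
  obtain ⟨f, rfl⟩ := exists_eq_sum_C_mul_of_degree_lt hK.degree_eq hp
  refine Finset.sum_eq_zero fun m hm => ?_
  have hm := Finset.mem_range.1 hm
  have hfm := h m hm
  rw [hK.polyInner_sum_C_mul f hm, mul_eq_zero] at hfm
  rw [hfm.resolve_right (div_pos (sub_pos.2 ht) (by positivity)).ne', map_zero, zero_mul]

/- The difference of the two sides has degree `< j` (compare the coefficients of `X ^ j`) and is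
orthogonal to `K m` for `m < j`, since `p ↦ (bubble p')'` is symmetric and does not raise degrees. -/
lemma derivative_bubble_mul_derivative (hK : IsLegendreBasis t₀ t₁ K) (ht : t₀ < t₁) (j : ℕ) :
    derivative (bubble t₀ t₁ * derivative (K j)) = -(C ((j : ℝ) * (j + 1)) * K j) := by
  rw [← sub_eq_zero, sub_neg_eq_add]
  refine hK.eq_zero_of_forall_polyInner_eq_zero ht (n := j) ?_ fun m hm => ?_
  · refine (degree_lt_iff_coeff_zero _ _).2 fun m hm => ?_
    rw [coeff_add, coeff_C_mul]
    obtain rfl | hm := hm.eq_or_lt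
    · rw [coeff_derivative_bubble_mul_derivative t₀ t₁ (hK.natDegree_eq j).le]
      ring
    · have hdeg := (hK.natDegree_eq j).trans_lt hm
      rw [coeff_eq_zero_of_natDegree_lt hdeg, coeff_eq_zero_of_natDegree_lt
        ((natDegree_derivative_bubble_mul_derivative_le t₀ t₁ _).trans_lt hdeg)]
      ring
  · have hdeg : (derivative (bubble t₀ t₁ * derivative (K m))).degree < j :=
      degree_le_natDegree.trans_lt <| Nat.cast_lt.2 <|
        (natDegree_derivative_bubble_mul_derivative_le t₀ t₁ _).trans_lt
          ((hK.natDegree_eq m).trans_lt hm)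
    rw [polyInner_add_left, polyInner_C_mul_left, polyInner_derivative_bubble_mul_comm,
      hK.polyInner_eq_zero_of_degree_lt hdeg, hK.polyInner_of_ne hm.ne', mul_zero, add_zero]

lemma derivative_eval_left (hK : IsLegendreBasis t₀ t₁ K) (ht : t₀ < t₁) (j : ℕ) :
    (derivative (K j)).eval t₀ = (-1) ^ (j + 1) * (j * (j + 1) / (t₁ - t₀)) := by
  have h := congrArg (eval t₀) (hK.derivative_bubble_mul_derivative ht j)
  simp only [derivative_mul, derivative_bubble, eval_add, eval_mul, eval_sub, eval_C, eval_X,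
    eval_neg, eval_ofNat, bubble_eval_left, zero_mul, add_zero, hK.eval_left] at h
  field_simp [(sub_pos.2 ht).ne']
  linear_combination h

lemma derivative_eval_right (hK : IsLegendreBasis t₀ t₁ K) (ht : t₀ < t₁) (j : ℕ) :
    (derivative (K j)).eval t₁ = j * (j + 1) / (t₁ - t₀) := by
  have h := congrArg (eval t₁) (hK.derivative_bubble_mul_derivative ht j)
  simp only [derivative_mul, derivative_bubble, eval_add, eval_mul, eval_sub, eval_C, eval_X,
    eval_neg, eval_ofNat, bubble_eval_right, zero_mul, add_zero, hK.eval_right] at h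
  field_simp [(sub_pos.2 ht).ne']
  linear_combination -h

lemma polyInner_derivative (hK : IsLegendreBasis t₀ t₁ K) (i j : ℕ) :
    polyInner t₀ t₁ (derivative (K i)) (K j) = if j < i then 1 - (-1) ^ (i + j) else 0 := by
  have hparts := polyInner_derivative_add t₀ t₁ (K i) (K j)
  have hlt : ∀ i, (derivative (K i)).degree < i := fun i =>
    hK.degree_eq i ▸ degree_derivative_lt (hK.ne_zero i)
  split_ifs with hji
  · rw [polyInner_comm t₀ t₁ (K i), hK.polyInner_eq_zero_of_degree_lt
      ((hlt j).trans (Nat.cast_lt.2 hji)), eval_mul, eval_mul, hK.eval_left, hK.eval_left,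
      hK.eval_right, hK.eval_right] at hparts
    rw [pow_add]
    linear_combination hparts
  · exact hK.polyInner_eq_zero_of_degree_lt ((hlt i).trans_le (Nat.cast_le.2 (not_lt.1 hji)))

lemma polyInner_Lop (hK : IsLegendreBasis t₀ t₁ K) (ht : t₀ < t₁) {r j : ℕ} (hj : j ≤ r)
    (z : ℝ) : polyInner t₀ t₁ (Lop t₀ t₁ r K z) (K j) = z * (-1) ^ j := by
  rw [Lop, polyInner_C_mul_left, hK.polyInner_sum_C_mul (fun i => (-1) ^ i * (2 * (i : ℝ) + 1))
    (Nat.lt_succ_of_le hj)]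
  field_simp [(sub_pos.2 ht).ne']

lemma abs_eval_le_one (hK : IsLegendreBasis t₀ t₁ K) (ht : t₀ < t₁) (j : ℕ) {t : ℝ}
    (htI : t ∈ Set.Icc t₀ t₁) : |(K j).eval t| ≤ 1 := by
  obtain rfl | hj := Nat.eq_zero_or_pos j
  · have hK0 := hK.eval_right 0
    rw [eq_C_of_natDegree_eq_zero (hK.natDegree_eq 0)] at hK0 ⊢
    simp_all
  have hode := hK.derivative_bubble_mul_derivative ht j
  rw [derivative_mul] at hode
  refine abs_eval_le_of_bubble_mul_derivative_derivative (c := j * (j + 1)) (α := 1)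
    (by positivity) (by norm_num) ?_ ?_ ?_ htI
  · rw [map_one, one_mul]
    linear_combination hode
  · simp [hK.eval_left]
  · simp [hK.eval_right]

lemma abs_derivative_eval_le (hK : IsLegendreBasis t₀ t₁ K) (ht : t₀ < t₁) (j : ℕ) {t : ℝ}
    (htI : t ∈ Set.Icc t₀ t₁) : |(derivative (K j)).eval t| ≤ j * (j + 1) / (t₁ - t₀) := by
  have hk := sub_pos.2 ht
  obtain hj | hj := lt_or_ge j 2
  · have hconst : (derivative (K j)).natDegree = 0 := by
      have := natDegree_derivative_le (K j)
      rw [hK.natDegree_eq] at this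
      omega
    have hright := hK.derivative_eval_right ht j
    rw [eq_C_of_natDegree_eq_zero hconst, eval_C] at hright ⊢
    rw [hright, abs_of_nonneg (by positivity)]
  have hode := hK.derivative_bubble_mul_derivative ht j
  rw [derivative_mul, derivative_bubble] at hode
  replace hode := congrArg derivative hode
  simp only [derivative_add, derivative_mul, derivative_sub, derivative_C, derivative_X,
    derivative_neg, derivative_ofNat, zero_mul, zero_add, zero_sub, mul_one,
    derivative_bubble] at hode
  have hj' : (2 : ℝ) ≤ j := by exact_mod_cast hj
  refine abs_eval_le_of_bubble_mul_derivative_derivative (c := j * (j + 1) - 2) (α := 2)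
    (by nlinarith) (by norm_num) ?_ ?_ ?_ htI
  · rw [derivative_bubble]
    simp only [map_sub, map_ofNat]
    linear_combination hode
  · rw [hK.derivative_eval_left ht, abs_mul, abs_neg_one_pow, one_mul,
      abs_of_nonneg (by positivity)]
  · rw [hK.derivative_eval_right ht, abs_of_nonneg (by positivity)]

lemma coeff_equation (hK : IsLegendreBasis t₀ t₁ K) (ht : t₀ < t₁) {r : ℕ} {lam : ℝ}
    {a : ℕ → ℝ} (hψ : Gam t₀ t₁ r K lam (∑ i ∈ Finset.range (r + 1), C (a i) * K i) =
      Lop t₀ t₁ r K 1) {j : ℕ} (hj : j ≤ r) :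
    lam * ((t₁ - t₀) / (2 * j + 1)) * ((-1) ^ j * a j) =
      (1 - ∑ i ∈ Finset.range (r + 1), (-1) ^ i * a i) +
        ∑ i ∈ Finset.Ioc j r, (1 - (-1) ^ (i + j)) * ((-1) ^ i * a i) := by
  have h := congrArg (fun p => polyInner t₀ t₁ p (K j)) hψ
  simp only [Gam, polyInner_add_left, polyInner_C_mul_left, hK.polyInner_Lop ht hj,
    derivative_sum, derivative_C_mul, polyInner_sum_left, hK.polyInner_derivative,
    hK.polyInner_sum_C_mul _ (Nat.lt_succ_of_le hj), eval_finsetSum, eval_mul, eval_C,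
    hK.eval_left, mul_ite, mul_zero] at h
  have he : ((-1 : ℝ) ^ j) * (-1) ^ j = 1 := by rw [← mul_pow]; norm_num
  have hfilter : (Finset.range (r + 1)).filter (j < ·) = Finset.Ioc j r := by
    ext i
    simp only [Finset.mem_filter, Finset.mem_range, Finset.mem_Ioc]
    omega
  have hflip : (-1) ^ j * ∑ i ∈ Finset.Ioc j r, a i * (1 - (-1) ^ (i + j)) =
      -∑ i ∈ Finset.Ioc j r, (1 - (-1) ^ (i + j)) * ((-1) ^ i * a i) := by
    rw [Finset.mul_sum, ← Finset.sum_neg_distrib]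
    refine Finset.sum_congr rfl fun i _ => ?_
    have hi : ((-1 : ℝ) ^ i) * (-1) ^ i = 1 := by rw [← mul_pow]; norm_num
    rw [pow_add]
    linear_combination (-(-1) ^ i * a i) * he + (-(-1) ^ j * a i) * hi
  rw [← Finset.sum_filter, hfilter,
    Finset.sum_congr rfl fun i _ => mul_comm (a i) ((-1) ^ i)] at h
  linear_combination (-1) ^ j * h - hflip + (1 - ∑ i ∈ Finset.range (r + 1), (-1) ^ i * a i) * he

lemma alternating_coeff_pos_and_sum_lt_one (hK : IsLegendreBasis t₀ t₁ K) (ht : t₀ < t₁)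
    {r : ℕ} {lam : ℝ} (hlam : 0 < lam) {a : ℕ → ℝ}
    (hψ : Gam t₀ t₁ r K lam (∑ i ∈ Finset.range (r + 1), C (a i) * K i) = Lop t₀ t₁ r K 1) :
    (∀ i ≤ r, 0 < (-1) ^ i * a i) ∧ ∑ i ∈ Finset.range (r + 1), (-1) ^ i * a i < 1 := by
  have hκ : ∀ j ≤ r, 0 < lam * ((t₁ - t₀) / (2 * j + 1)) := fun j _ =>
    mul_pos hlam (div_pos (sub_pos.2 ht) (by positivity))
  have hw : ∀ i j : ℕ, 0 ≤ 1 - (-1 : ℝ) ^ (i + j) := fun i j =>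
    sub_nonneg.2 ((le_abs_self _).trans (abs_neg_one_pow _).le)
  have hsys := fun j (hj : j ≤ r) => hK.coeff_equation ht hψ hj
  have hc : 0 < 1 - ∑ i ∈ Finset.range (r + 1), (-1) ^ i * a i := by
    by_contra! hc
    have hneg := le_mul_of_eq_add_sum_Ioc (x := fun i => -((-1) ^ i * a i)) (neg_nonneg.2 hc)
      hκ hw fun j hj => by
        rw [Finset.sum_congr rfl fun i _ => mul_neg _ _, Finset.sum_neg_distrib]
        linear_combination -hsys j hj
    have hsum : ∑ i ∈ Finset.range (r + 1), (-1) ^ i * a i ≤ 0 :=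
      Finset.sum_nonpos fun i hi => by
        have hi := Nat.lt_succ_iff.1 (Finset.mem_range.1 hi)
        exact neg_nonneg.1 (nonneg_of_mul_nonneg_right ((neg_nonneg.2 hc).trans (hneg i hi))
          (hκ i hi))
    linarith
  exact ⟨fun j hj => pos_of_mul_pos_right
    (hc.trans_le (le_mul_of_eq_add_sum_Ioc hc.le hκ hw hsys j hj)) (hκ j hj).le, by linarith⟩

lemma eval_left_sum (hK : IsLegendreBasis t₀ t₁ K) (s : Finset ℕ) (a : ℕ → ℝ) :
    (∑ i ∈ s, C (a i) * K i).eval t₀ = ∑ i ∈ s, (-1) ^ i * a i := by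
  simp only [eval_finsetSum, eval_mul, eval_C, hK.eval_left, mul_comm]

lemma derivative_eval_left_sum (hK : IsLegendreBasis t₀ t₁ K) (ht : t₀ < t₁) (s : Finset ℕ)
    (a : ℕ → ℝ) : (derivative (∑ i ∈ s, C (a i) * K i)).eval t₀ =
      -∑ i ∈ s, (-1) ^ i * a i * (i * (i + 1) / (t₁ - t₀)) := by
  simp only [derivative_sum, derivative_C_mul, eval_finsetSum, eval_mul, eval_C,
    hK.derivative_eval_left ht, ← Finset.sum_neg_distrib, pow_succ]
  exact Finset.sum_congr rfl fun i _ => by ring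

lemma abs_eval_sum_le (hK : IsLegendreBasis t₀ t₁ K) (ht : t₀ < t₁) (s : Finset ℕ)
    (a : ℕ → ℝ) {t : ℝ} (htI : t ∈ Set.Icc t₀ t₁) :
    |(∑ i ∈ s, C (a i) * K i).eval t| ≤ ∑ i ∈ s, |a i| := by
  simp only [eval_finsetSum, eval_mul, eval_C]
  simpa using abs_sum_mul_le_sum_abs_mul s fun i _ => hK.abs_eval_le_one ht i htI

lemma abs_derivative_eval_sum_le (hK : IsLegendreBasis t₀ t₁ K) (ht : t₀ < t₁) (s : Finset ℕ)
    (a : ℕ → ℝ) {t : ℝ} (htI : t ∈ Set.Icc t₀ t₁) :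
    |(derivative (∑ i ∈ s, C (a i) * K i)).eval t| ≤
      ∑ i ∈ s, |a i| * (i * (i + 1) / (t₁ - t₀)) := by
  simp only [derivative_sum, derivative_C_mul, eval_finsetSum, eval_mul, eval_C]
  exact abs_sum_mul_le_sum_abs_mul s fun i _ => hK.abs_derivative_eval_le ht i htI

end IsLegendreBasis

/-- Stability of the dG fundamental solution: `0 < ψ(t₀) < 1`,
`max_{[t₀,t₁]} |ψ| = ψ(t₀)`, and `max_{[t₀,t₁]} |ψ'| = -ψ'(t₀)`. -/
theorem stmt_9 (t₀ t₁ : ℝ) (ht : t₀ < t₁) (r : ℕ) (K : ℕ → Polynomial ℝ)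
    (hK : IsLegendreBasis t₀ t₁ K) (lam : ℝ) (hlam : 0 < lam)
    (ψ : Polynomial ℝ) (hψdeg : ψ.natDegree ≤ r)
    (hψ : Gam t₀ t₁ r K lam ψ = Lop t₀ t₁ r K 1) :
    (0 < ψ.eval t₀ ∧ ψ.eval t₀ < 1) ∧
    IsGreatest ((fun t => |ψ.eval t|) '' Set.Icc t₀ t₁) (ψ.eval t₀) ∧
    IsGreatest ((fun t => |(Polynomial.derivative ψ).eval t|) '' Set.Icc t₀ t₁)
      (-(Polynomial.derivative ψ).eval t₀) := by
  obtain ⟨a, rfl⟩ := exists_eq_sum_C_mul_of_degree_lt hK.degree_eq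
    ((degree_le_of_natDegree_le hψdeg).trans_lt (WithBot.coe_lt_coe.2 r.lt_succ_self))
  obtain ⟨hpos, hlt⟩ := hK.alternating_coeff_pos_and_sum_lt_one ht hlam hψ
  replace hpos : ∀ i ∈ Finset.range (r + 1), 0 < (-1) ^ i * a i :=
    fun i hi => hpos i (Nat.lt_succ_iff.1 (Finset.mem_range.1 hi))
  have habs : ∀ i ∈ Finset.range (r + 1), |a i| = (-1) ^ i * a i := fun i hi => by
    rw [← abs_of_pos (hpos i hi), abs_mul, abs_neg_one_pow, one_mul]
  have hψ₀ : 0 < ∑ i ∈ Finset.range (r + 1), (-1) ^ i * a i :=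
    Finset.sum_pos hpos ⟨0, by simp⟩
  have hψ'₀ : 0 ≤ ∑ i ∈ Finset.range (r + 1), (-1) ^ i * a i * (i * (i + 1) / (t₁ - t₀)) :=
    Finset.sum_nonneg fun i hi =>
      mul_nonneg (hpos i hi).le (div_nonneg (by positivity) (sub_pos.2 ht).le)
  simp only [hK.eval_left_sum, hK.derivative_eval_left_sum ht, neg_neg]
  refine ⟨⟨hψ₀, hlt⟩, ⟨⟨t₀, Set.left_mem_Icc.2 ht.le, ?_⟩, Set.forall_mem_image.2 fun t htI => ?_⟩,
    ⟨⟨t₀, Set.left_mem_Icc.2 ht.le, ?_⟩, Set.forall_mem_image.2 fun t htI => ?_⟩⟩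
  · simp only [hK.eval_left_sum, abs_of_pos hψ₀]
  · exact (hK.abs_eval_sum_le ht _ a htI).trans_eq (Finset.sum_congr rfl habs)
  · simp only [hK.derivative_eval_left_sum ht, abs_neg, abs_of_nonneg hψ'₀]
  · exact (hK.abs_derivative_eval_sum_le ht _ a htI).trans_eq
      (Finset.sum_congr rfl fun i hi => by rw [habs i hi])
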